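/- Let p = [b_1^{a_1} ⋯ b_r^{a_r}] (b_1 ≥ ⋯ ≥ b_r) be a symplectic partition of 2n. Then Σ_{i : b_i odd} a_i is even, so 2n* = Σ_{i : b_i odd} a_i; set P := [p_1 p_1 (2n*+1)] (the union of two copies of p_1 and one extra part 2n*+1), which is an orthogonal partition of 2n+1. Then P^{SO_{2n+1}} = ((p^+)_{SO_{2n+1}})^t if and only if (P^t)_{SO_{2n+1}} = (p^+)_{SO_{2n+1}}. -/

import Mathlib

namespace JiangWF

/-- `sCount p i` : the number of parts of `p` that are `≥ i`. -/
def sCount (p : Multiset ℕ) (i : ℕ) : ℕ := (p.filter (fun a => i ≤ a)).card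

/-- `rCount p i` : the number of parts of `p` equal to `i`. -/
def rCount (p : Multiset ℕ) (i : ℕ) : ℕ := p.count i

/-- The largest part of `p` (`0` for the empty partition). -/
def maxPart (p : Multiset ℕ) : ℕ := p.sup

/-- The smallest part of `p` (`0` for the empty partition). -/
noncomputable def minPart (p : Multiset ℕ) : ℕ := sInf {a : ℕ | a ∈ p}

/-- The transpose partition: its `i`-th part is `sCount p i`, for `1 ≤ i ≤ maxPart p`. -/
def transpose (p : Multiset ℕ) : Multiset ℕ :=
  (Multiset.range (maxPart p)).map fun i => sCount p (i + 1)

/-- The sum of the `m` largest parts of `p`. -/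
def topSum (p : Multiset ℕ) (m : ℕ) : ℕ :=
  ∑ i ∈ Finset.Icc 1 p.sum, min m (sCount p i)

/-- Dominance order: `domLE p q` means `p ≤ q`. -/
def domLE (p q : Multiset ℕ) : Prop := ∀ m, topSum p m ≤ topSum q m

/-- `p` is a partition of `N`: all parts positive, summing to `N`. -/
def IsPartitionOf (p : Multiset ℕ) (N : ℕ) : Prop := (∀ a ∈ p, 0 < a) ∧ p.sum = N

/-- Symplectic partition: every odd part occurs with even multiplicity. -/
def IsSymplectic (p : Multiset ℕ) : Prop := ∀ a, a % 2 = 1 → Even (p.count a)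

/-- Orthogonal partition: every even part occurs with even multiplicity. -/
def IsOrthogonal (p : Multiset ℕ) : Prop := ∀ a, a % 2 = 0 → Even (p.count a)

/-- `p^-`: decrease the smallest part by one (deleting it if it becomes `0`). -/
noncomputable def pMinus (p : Multiset ℕ) : Multiset ℕ :=
  if minPart p ≤ 1 then p.erase (minPart p)
  else (minPart p - 1) ::ₘ p.erase (minPart p)

/-- `p^+`: increase the largest part by one. -/
def pPlus (p : Multiset ℕ) : Multiset ℕ := (maxPart p + 1) ::ₘ p.erase (maxPart p)

/-- `p^{+-}`: increase the largest part by one and decrease the smallest by one. -/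
noncomputable def pPM (p : Multiset ℕ) : Multiset ℕ := pMinus (pPlus p)

/-- `p₁ = [⌊b_1/2⌋^{a_1} ⋯ ⌊b_r/2⌋^{a_r}]^t` (discarding zero entries before transposing). -/
def pOne (p : Multiset ℕ) : Multiset ℕ :=
  transpose ((p.map fun b => b / 2).filter fun x => 0 < x)

/-- `Σ_{i : b_i odd} a_i`: the number of odd parts of `p`. -/
def oddMult (p : Multiset ℕ) : ℕ := (p.filter fun a => a % 2 = 1).card

/-- `n* = ⌊(Σ_{i : b_i odd} a_i)/2⌋`. -/
def nStar (p : Multiset ℕ) : ℕ := oddMult p / 2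

/-- Append an extra part `m` to `q`, omitted if `m = 0`. -/
def addPart (m : ℕ) (q : Multiset ℕ) : Multiset ℕ := if m = 0 then q else m ::ₘ q

/-- `c` is the `Sp`-collapse of `p`: the maximal symplectic partition `≤ p` in dominance. -/
def IsSpCollapse (p c : Multiset ℕ) : Prop :=
  IsPartitionOf c p.sum ∧ IsSymplectic c ∧ domLE c p ∧
    ∀ c', IsPartitionOf c' p.sum → IsSymplectic c' → domLE c' p → domLE c' c

/-- `c` is the `SO`-collapse of `p`: the maximal orthogonal partition `≤ p` in dominance. -/
def IsSOCollapse (p c : Multiset ℕ) : Prop :=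
  IsPartitionOf c p.sum ∧ IsOrthogonal c ∧ domLE c p ∧
    ∀ c', IsPartitionOf c' p.sum → IsOrthogonal c' → domLE c' p → domLE c' c

/-- `e` is the `Sp`-expansion of `p`: the minimal special symplectic partition `≥ p`. -/
def IsSpExpansion (p e : Multiset ℕ) : Prop :=
  IsPartitionOf e p.sum ∧ IsSymplectic e ∧ IsSymplectic (transpose e) ∧ domLE p e ∧
    ∀ e', IsPartitionOf e' p.sum → IsSymplectic e' → IsSymplectic (transpose e') →
      domLE p e' → domLE e e'

/-- `e` is the `SO_{2n+1}`-expansion of `p`: the minimal special orthogonal partition `≥ p`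
(odd case: special means the transpose is orthogonal). -/
def IsSOOddExpansion (p e : Multiset ℕ) : Prop :=
  IsPartitionOf e p.sum ∧ IsOrthogonal e ∧ IsOrthogonal (transpose e) ∧ domLE p e ∧
    ∀ e', IsPartitionOf e' p.sum → IsOrthogonal e' → IsOrthogonal (transpose e') →
      domLE p e' → domLE e e'

/-- `e` is the `SO_{2n}`-expansion of `p`: the minimal special orthogonal partition `≥ p`
(even case: special means the transpose is symplectic). -/
def IsSOEvenExpansion (p e : Multiset ℕ) : Prop :=
  IsPartitionOf e p.sum ∧ IsOrthogonal e ∧ IsSymplectic (transpose e) ∧ domLE p e ∧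
    ∀ e', IsPartitionOf e' p.sum → IsOrthogonal e' → IsSymplectic (transpose e') →
      domLE p e' → domLE e e'

/-- `dim_C(q)` for a symplectic partition `q` of `2k`:
`2k² + k − (1/2)Σ s_i(q)² − (1/2)Σ_{i odd} r_i(q)` (note `2k² + k = (|q|² + |q|)/2`). -/
def dimC (p : Multiset ℕ) : ℚ :=
  ((p.sum : ℚ) ^ 2 + (p.sum : ℚ)) / 2
    - (∑ i ∈ Finset.Icc 1 p.sum, (sCount p i : ℚ) ^ 2) / 2
    - (∑ i ∈ Finset.Icc 1 p.sum, if i % 2 = 1 then (rCount p i : ℚ) else 0) / 2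

/-- `dim_B(q)` for an orthogonal partition `q` of `2k+1`:
`2k² + k − (1/2)Σ s_i(q)² + (1/2)Σ_{i odd} r_i(q)` (note `2k² + k = (|q|² − |q|)/2`). -/
def dimB (p : Multiset ℕ) : ℚ :=
  ((p.sum : ℚ) ^ 2 - (p.sum : ℚ)) / 2
    - (∑ i ∈ Finset.Icc 1 p.sum, (sCount p i : ℚ) ^ 2) / 2
    + (∑ i ∈ Finset.Icc 1 p.sum, if i % 2 = 1 then (rCount p i : ℚ) else 0) / 2

/-- `dim_D(q)` for an orthogonal partition `q` of `2k`:
`2k² − k − (1/2)Σ s_i(q)² + (1/2)Σ_{i odd} r_i(q)` (note `2k² − k = (|q|² − |q|)/2`). -/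
def dimD (p : Multiset ℕ) : ℚ :=
  ((p.sum : ℚ) ^ 2 - (p.sum : ℚ)) / 2
    - (∑ i ∈ Finset.Icc 1 p.sum, (sCount p i : ℚ) ^ 2) / 2
    + (∑ i ∈ Finset.Icc 1 p.sum, if i % 2 = 1 then (rCount p i : ℚ) else 0) / 2

/-!
Write `P = [p₁ p₁ (2n*+1)]`. Halving the parts of `p` and counting its odd parts recovers `|p|`,
which gives the numerical claims. The content is that the `SO`-collapse `c` of `Pᵗ` is special.
Otherwise `cᵗ` has an even part of odd multiplicity, and then `c` contains some even part `v`
twice, at positions where the top sums of `c` are strictly below those of `Pᵗ`: the first `2n*+1`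
parts of `Pᵗ` are odd, and beyond them the top sums of `Pᵗ` are odd while those of `c` are even.
Replacing `v, v` by `v+1, v-1` then gives a strictly larger orthogonal partition still dominated
by `Pᵗ`. As transposition reverses dominance, for special `c` the partition `cᵗ` is the
`SO`-expansion of `P`, and the equivalence reduces to the injectivity of transposition.
-/

lemma sCount_cons (a : ℕ) (s : Multiset ℕ) (i : ℕ) :
    sCount (a ::ₘ s) i = sCount s i + if i ≤ a then 1 else 0 := by
  unfold sCount
  split_ifs with h
  · rw [Multiset.filter_cons_of_pos _ h, Multiset.card_cons]
  · rw [Multiset.filter_cons_of_neg _ h, add_zero]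

lemma sCount_add (s t : Multiset ℕ) (i : ℕ) : sCount (s + t) i = sCount s i + sCount t i := by
  simp only [sCount, Multiset.filter_add, Multiset.card_add]

lemma sCount_antitone (s : Multiset ℕ) : Antitone (sCount s) := fun _ _ hij =>
  Multiset.card_le_card (Multiset.monotone_filter_right s fun _ ha => hij.trans ha)

lemma count_add_sCount_succ (s : Multiset ℕ) (i : ℕ) :
    s.count i + sCount s (i + 1) = sCount s i := by
  induction s using Multiset.induction with
  | empty => rfl
  | cons a t ih =>
    rw [Multiset.count_cons, sCount_cons, sCount_cons]
    split_ifs <;> omega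

lemma sCount_eq_zero_of_maxPart_lt {s : Multiset ℕ} {i : ℕ} (h : maxPart s < i) :
    sCount s i = 0 := by
  rw [sCount, Multiset.card_eq_zero, Multiset.filter_eq_nil]
  exact fun a ha hia => absurd (Multiset.le_sup ha) (by unfold maxPart at h; omega)

lemma maxPart_le_sum (s : Multiset ℕ) : maxPart s ≤ s.sum :=
  Multiset.sup_le.2 fun _ h => Multiset.le_sum_of_mem h

lemma sum_Ioc_sCount (s : Multiset ℕ) (m n : ℕ) :
    ∑ i ∈ Finset.Ioc m n, sCount s i = (s.map fun a => min a n - m).sum := by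
  induction s using Multiset.induction with
  | empty => simp [sCount]
  | cons a t ih =>
    have hcard : ∑ i ∈ Finset.Ioc m n, (if i ≤ a then 1 else 0) = min a n - m := by
      rw [Finset.sum_boole, Nat.cast_id, ← Nat.card_Ioc m (min a n)]
      congr 1
      ext i
      simp only [Finset.mem_filter, Finset.mem_Ioc]
      omega
    simp only [sCount_cons, Finset.sum_add_distrib, ih, hcard, Multiset.map_cons,
      Multiset.sum_cons]
    omega

lemma sum_map_transpose (q : Multiset ℕ) (f : ℕ → ℕ) :
    ((transpose q).map f).sum = ∑ i ∈ Finset.Ioc 0 (maxPart q), f (sCount q i) := by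
  rw [transpose, Multiset.map_map, ← Finset.Ico_add_one_add_one_eq_Ioc, ← Finset.sum_Ico_add',
    ← Finset.range_eq_Ico]
  rfl

lemma topSum_eq_sum_Ioc {s : Multiset ℕ} {N : ℕ} (hN : maxPart s ≤ N) (k : ℕ) :
    topSum s k = ∑ i ∈ Finset.Ioc 0 N, min k (sCount s i) := by
  have hextend : ∀ N, maxPart s ≤ N → ∑ i ∈ Finset.Ioc 0 (maxPart s), min k (sCount s i) =
      ∑ i ∈ Finset.Ioc 0 N, min k (sCount s i) := fun N hN =>
    Finset.sum_subset (Finset.Ioc_subset_Ioc_right hN) fun i hi hi' => by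
      rw [sCount_eq_zero_of_maxPart_lt (by simp only [Finset.mem_Ioc] at hi hi'; omega),
        Nat.min_zero]
  have hIcc : Finset.Icc 1 s.sum = Finset.Ioc 0 s.sum := Finset.Icc_add_one_left_eq_Ioc 0 _
  rw [topSum, hIcc, ← hextend _ hN, hextend _ (maxPart_le_sum s)]

lemma le_sCount_transpose_iff {q : Multiset ℕ} {i v : ℕ} (hi : 1 ≤ i) (hv : 1 ≤ v) :
    i ≤ sCount (transpose q) v ↔ v ≤ sCount q i := by
  have hcard : sCount (transpose q) v =
      ((Finset.range (maxPart q)).filter fun j => v ≤ sCount q (j + 1)).card := by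
    rw [sCount, transpose, ← Multiset.countP_eq_card_filter, Multiset.countP_map]
    rfl
  rw [hcard]
  constructor
  · intro h
    by_contra! hlt
    have hsub : (Finset.range (maxPart q)).filter (fun j => v ≤ sCount q (j + 1)) ⊆
        Finset.range (i - 1) := fun j hj => by
      simp only [Finset.mem_filter, Finset.mem_range] at hj ⊢
      by_contra! hji
      have := sCount_antitone q (show i ≤ j + 1 by omega)
      omega
    have := Finset.card_le_card hsub
    rw [Finset.card_range] at this
    omega
  · intro h
    have hiM : i ≤ maxPart q := by
      by_contra! hlt
      rw [sCount_eq_zero_of_maxPart_lt hlt] at h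
      omega
    calc i = (Finset.range i).card := (Finset.card_range i).symm
      _ ≤ _ := Finset.card_le_card fun j hj => by
        simp only [Finset.mem_filter, Finset.mem_range] at hj ⊢
        exact ⟨by omega, h.trans (sCount_antitone q (by omega))⟩

lemma transpose_pos (q : Multiset ℕ) : ∀ b ∈ transpose q, 0 < b := by
  intro b hb
  obtain ⟨j, hj, rfl⟩ := Multiset.mem_map.1 hb
  rw [Multiset.mem_range] at hj
  have hsucc : j + 1 ≤ maxPart q := hj
  by_contra! h0
  have hle : maxPart q ≤ j := Multiset.sup_le.2 fun a ha => by
    by_contra! hja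
    have : 0 < sCount q (j + 1) :=
      Multiset.card_pos_iff_exists_mem.2 ⟨a, Multiset.mem_filter.2 ⟨ha, hja⟩⟩
    omega
  omega

lemma sum_transpose (q : Multiset ℕ) : (transpose q).sum = q.sum := by
  have h := sum_map_transpose q id
  rw [Multiset.map_id] at h
  rw [h, Finset.sum_congr rfl fun _ _ => id_eq _, sum_Ioc_sCount]
  congr 1
  refine (Multiset.map_congr rfl fun a ha => ?_).trans (Multiset.map_id q)
  have : a ≤ maxPart q := Multiset.le_sup ha
  simp only [id]
  omega

lemma sCount_transpose_transpose (q : Multiset ℕ) {i : ℕ} (hi : 1 ≤ i) :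
    sCount (transpose (transpose q)) i = sCount q i :=
  eq_of_forall_le_iff fun v => by
    rcases Nat.eq_zero_or_pos v with rfl | hv
    · simp
    · rw [le_sCount_transpose_iff hv hi, le_sCount_transpose_iff hi hv]

lemma eq_of_sCount_eq {s t : Multiset ℕ} (hs : ∀ a ∈ s, 0 < a) (ht : ∀ a ∈ t, 0 < a)
    (h : ∀ i, 1 ≤ i → sCount s i = sCount t i) : s = t := by
  ext a
  rcases Nat.eq_zero_or_pos a with rfl | ha
  · rw [Multiset.count_eq_zero.2 fun h0 => (hs 0 h0).false,
      Multiset.count_eq_zero.2 fun h0 => (ht 0 h0).false]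
  · have := count_add_sCount_succ s a
    have := count_add_sCount_succ t a
    have := h a ha
    have := h (a + 1) (by omega)
    omega

lemma transpose_transpose {q : Multiset ℕ} (hq : ∀ a ∈ q, 0 < a) :
    transpose (transpose q) = q :=
  eq_of_sCount_eq (transpose_pos _) hq fun _ => sCount_transpose_transpose q

lemma transpose_inj {s t : Multiset ℕ} (hs : ∀ a ∈ s, 0 < a) (ht : ∀ a ∈ t, 0 < a) :
    transpose s = transpose t ↔ s = t :=
  ⟨fun h => by rw [← transpose_transpose hs, h, transpose_transpose ht], congrArg transpose⟩

lemma topSum_eq_sum_sCount_transpose (s : Multiset ℕ) (k : ℕ) :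
    topSum s k = ∑ i ∈ Finset.Ioc 0 k, sCount (transpose s) i := by
  rw [sum_Ioc_sCount, sum_map_transpose, topSum_eq_sum_Ioc le_rfl]
  exact Finset.sum_congr rfl fun i _ => by omega

lemma topSum_succ (s : Multiset ℕ) (k : ℕ) :
    topSum s (k + 1) = topSum s k + sCount (transpose s) (k + 1) := by
  rw [topSum_eq_sum_sCount_transpose, topSum_eq_sum_sCount_transpose,
    Finset.sum_Ioc_succ_top (Nat.zero_le k)]

lemma topSum_transpose {s : Multiset ℕ} (hs : ∀ a ∈ s, 0 < a) (k : ℕ) :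
    topSum (transpose s) k = (s.map fun a => min a k).sum := by
  rw [topSum_eq_sum_sCount_transpose, transpose_transpose hs, sum_Ioc_sCount]
  simp only [Nat.sub_zero]

lemma sum_map_min_add_sum_map_sub (s : Multiset ℕ) (k : ℕ) :
    (s.map fun a => min a k).sum + (s.map (· - k)).sum = s.sum := by
  rw [← Multiset.sum_map_add]
  exact congrArg Multiset.sum
    ((Multiset.map_congr rfl fun a _ => by simp only [id]; omega).trans (Multiset.map_id s))

lemma sum_map_sub_eq_sum_Ioc {s : Multiset ℕ} {N : ℕ} (hN : maxPart s ≤ N) (m : ℕ) :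
    (s.map (· - m)).sum = ∑ i ∈ Finset.Ioc m N, sCount s i := by
  rw [sum_Ioc_sCount]
  refine congrArg Multiset.sum (Multiset.map_congr rfl fun a ha => ?_)
  have : a ≤ maxPart s := Multiset.le_sup ha
  omega

lemma topSum_eq_add_sum_Ioc (s : Multiset ℕ) (k m : ℕ) :
    topSum s k = ∑ i ∈ Finset.Ioc 0 m, min k (sCount s i) +
      ∑ i ∈ Finset.Ioc m (m + maxPart s), min k (sCount s i) := by
  rw [topSum_eq_sum_Ioc (Nat.le_add_left _ m),
    Finset.sum_Ioc_consecutive _ (Nat.zero_le m) (Nat.le_add_right m _)]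

lemma topSum_le (s : Multiset ℕ) (k m : ℕ) : topSum s k ≤ m * k + (s.map (· - m)).sum := by
  rw [topSum_eq_add_sum_Ioc s k m, sum_map_sub_eq_sum_Ioc (Nat.le_add_left _ m)]
  gcongr with i
  · calc _ ≤ ∑ _ ∈ Finset.Ioc 0 m, k := Finset.sum_le_sum fun _ _ => min_le_left _ _
      _ = m * k := by simp
  · exact min_le_right _ _

lemma topSum_sCount_succ (s : Multiset ℕ) (m : ℕ) :
    topSum s (sCount s (m + 1)) = m * sCount s (m + 1) + (s.map (· - m)).sum := by
  rw [topSum_eq_add_sum_Ioc s _ m, sum_map_sub_eq_sum_Ioc (Nat.le_add_left _ m)]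
  congr 1
  · rw [Finset.sum_congr rfl fun i hi =>
      min_eq_left (sCount_antitone s (by simp only [Finset.mem_Ioc] at hi; omega))]
    simp
  · exact Finset.sum_congr rfl fun i hi =>
      min_eq_right (sCount_antitone s (by simp only [Finset.mem_Ioc] at hi; omega))

-- `∑ (a - m)` is the maximum over `j` of `topSum s j - m * j`, attained at
-- `j = sCount s (m + 1)`.
lemma sum_map_sub_le_of_domLE {s t : Multiset ℕ} (h : domLE s t) (m : ℕ) :
    (s.map (· - m)).sum ≤ (t.map (· - m)).sum := by
  have := topSum_sCount_succ s m
  have := topSum_le t (sCount s (m + 1)) m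
  have := h (sCount s (m + 1))
  omega

lemma transpose_domLE_transpose {s t : Multiset ℕ} (hs : ∀ a ∈ s, 0 < a)
    (ht : ∀ a ∈ t, 0 < a) (hsum : s.sum = t.sum) (h : domLE s t) :
    domLE (transpose t) (transpose s) := fun k => by
  rw [topSum_transpose hs, topSum_transpose ht]
  have := sum_map_min_add_sum_map_sub s k
  have := sum_map_min_add_sum_map_sub t k
  have := sum_map_sub_le_of_domLE h k
  omega

lemma domLE.antisymm {s t : Multiset ℕ} (hs : ∀ a ∈ s, 0 < a) (ht : ∀ a ∈ t, 0 < a)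
    (h : domLE s t) (h' : domLE t s) : s = t := by
  rw [← transpose_inj hs ht]
  refine eq_of_sCount_eq (transpose_pos s) (transpose_pos t) fun i hi => ?_
  obtain ⟨k, rfl⟩ : ∃ k, i = k + 1 := ⟨i - 1, by omega⟩
  have := topSum_succ s k
  have := topSum_succ t k
  have := le_antisymm (h k) (h' k)
  have := le_antisymm (h (k + 1)) (h' (k + 1))
  omega

lemma IsOrthogonal.filter {s : Multiset ℕ} (h : IsOrthogonal s) (P : ℕ → Prop)
    [DecidablePred P] : IsOrthogonal (s.filter P) := fun a ha => by
  rw [Multiset.count_filter]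
  split_ifs
  exacts [h a ha, ⟨0, rfl⟩]

lemma IsOrthogonal.sum_mod_two {s : Multiset ℕ} (h : IsOrthogonal s) :
    s.sum % 2 = Multiset.card s % 2 := by
  have hterm : ∀ a, s.count a • a % 2 = s.count a % 2 := fun a => by
    rw [smul_eq_mul, Nat.mul_mod]
    rcases Nat.mod_two_eq_zero_or_one a with ha | ha
    · simp [Nat.even_iff.1 (h a ha)]
    · rw [ha, mul_one, Nat.mod_mod]
  calc s.sum % 2 = (∑ a ∈ s.toFinset, s.count a • a) % 2 := by rw [Finset.sum_multiset_count]
    _ = (∑ a ∈ s.toFinset, s.count a) % 2 := by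
      rw [Finset.sum_nat_mod, Finset.sum_congr rfl fun a _ => hterm a, ← Finset.sum_nat_mod]
    _ = Multiset.card s % 2 := by rw [Multiset.toFinset_sum_count_eq]

lemma isOrthogonal_cons_add_self {b : ℕ} (hb : b % 2 = 1) (q : Multiset ℕ) :
    IsOrthogonal (b ::ₘ (q + q)) := fun a ha => by
  rw [Multiset.count_cons_of_ne (by omega), Multiset.count_add]
  exact ⟨_, rfl⟩

lemma cons_add_self_pos {q : Multiset ℕ} (hq : ∀ a ∈ q, 0 < a) {b : ℕ} (hb : 0 < b) :
    ∀ a ∈ b ::ₘ (q + q), 0 < a := by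
  simp only [Multiset.mem_cons, Multiset.mem_add, or_self]
  rintro a (rfl | ha)
  exacts [hb, hq a ha]

lemma card_filter_lt (s : Multiset ℕ) (v : ℕ) :
    Multiset.card (s.filter (v < ·)) = sCount s (v + 1) := rfl

lemma mul_sCount_succ_add_sum_map_sub (s : Multiset ℕ) (v : ℕ) :
    v * sCount s (v + 1) + (s.map (· - v)).sum = (s.filter (v < ·)).sum := by
  induction s using Multiset.induction with
  | empty => simp [sCount]
  | cons a t ih =>
    rw [sCount_cons, Multiset.map_cons, Multiset.sum_cons, Multiset.filter_cons, mul_add]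
    split_ifs <;> simp only [Multiset.sum_add, Multiset.sum_singleton, Multiset.sum_zero] <;>
      omega

lemma sCount_transpose_eq_of_mem_gap {c : Multiset ℕ} {v k : ℕ} (hv : 1 ≤ v)
    (h1 : sCount c (v + 1) < k) (h2 : k ≤ sCount c v) : sCount (transpose c) k = v := by
  have hk : 1 ≤ k := by omega
  refine le_antisymm ?_ ((le_sCount_transpose_iff hv hk).2 h2)
  by_contra! hlt
  have := (le_sCount_transpose_iff (by omega : 1 ≤ v + 1) hk).1 hlt
  omega

lemma topSum_of_mem_gap {c : Multiset ℕ} {v k : ℕ} (hv : 1 ≤ v) (h1 : sCount c (v + 1) ≤ k)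
    (h2 : k ≤ sCount c v) :
    topSum c k = (c.filter (v < ·)).sum + (k - sCount c (v + 1)) * v := by
  induction k, h1 using Nat.le_induction with
  | base => rw [topSum_sCount_succ, mul_sCount_succ_add_sum_map_sub, Nat.sub_self, zero_mul,
      add_zero]
  | succ k hk ih =>
    rw [topSum_succ, ih (by omega), sCount_transpose_eq_of_mem_gap hv (by omega) h2,
      Nat.sub_add_comm hk, Nat.succ_mul, add_assoc]

lemma IsOrthogonal.topSum_mod_two_of_mem_gap {c : Multiset ℕ} (ho : IsOrthogonal c) {v k : ℕ}
    (hv : 1 ≤ v) (hve : v % 2 = 0) (h1 : sCount c (v + 1) ≤ k) (h2 : k ≤ sCount c v) :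
    topSum c k % 2 = sCount c (v + 1) % 2 := by
  rw [topSum_of_mem_gap hv h1 h2, Nat.add_mod, (ho.filter _).sum_mod_two, card_filter_lt,
    Nat.mul_mod _ v, hve]
  simp

lemma topSum_transpose_cons_add_self_mod_two {q : Multiset ℕ} (hq : ∀ a ∈ q, 0 < a) {b : ℕ}
    (hb : 0 < b) (k : ℕ) : topSum (transpose (b ::ₘ (q + q))) k % 2 = min b k % 2 := by
  rw [topSum_transpose (cons_add_self_pos hq hb), Multiset.map_cons, Multiset.sum_cons,
    Multiset.map_add, Multiset.sum_add]
  omega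

lemma domLE.topSum_succ_lt {c Q : Multiset ℕ} (h : domLE c Q) {k : ℕ}
    (hflat : sCount (transpose c) (k + 1) = sCount (transpose c) (k + 2))
    (hne : sCount (transpose c) (k + 1) ≠ sCount (transpose Q) (k + 1)) :
    topSum c (k + 1) < topSum Q (k + 1) := by
  refine lt_of_le_of_ne (h (k + 1)) fun heq => hne ?_
  have := h k
  have := h (k + 2)
  have := topSum_succ c k
  have := topSum_succ Q k
  have : topSum c (k + 2) = topSum c (k + 1) + sCount (transpose c) (k + 2) :=
    topSum_succ c (k + 1)
  have : topSum Q (k + 2) = topSum Q (k + 1) + sCount (transpose Q) (k + 2) :=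
    topSum_succ Q (k + 1)
  have : sCount (transpose Q) (k + 2) ≤ sCount (transpose Q) (k + 1) :=
    sCount_antitone _ (by omega)
  omega

lemma topSum_lt_of_mem_gap {q c : Multiset ℕ} (hq : ∀ a ∈ q, 0 < a) {m : ℕ}
    (ho : IsOrthogonal c) (hdom : domLE c (transpose ((2 * m + 1) ::ₘ (q + q)))) {v k : ℕ}
    (hv : 2 ≤ v) (hve : v % 2 = 0) (hpar : sCount c (v + 1) % 2 = 0)
    (h1 : sCount c (v + 1) < k) (h2 : k < sCount c v) :
    topSum c k < topSum (transpose ((2 * m + 1) ::ₘ (q + q))) k := by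
  obtain ⟨k, rfl⟩ : ∃ j, k = j + 1 := ⟨k - 1, by omega⟩
  have hpart : ∀ j, sCount c (v + 1) < j → j ≤ sCount c v → sCount (transpose c) j = v :=
    fun _ => sCount_transpose_eq_of_mem_gap (by omega)
  rcases le_or_gt (k + 1) (2 * m + 1) with hkm | hkm
  · refine hdom.topSum_succ_lt (by rw [hpart _ h1 h2.le, hpart _ (by omega) h2]) ?_
    rw [hpart _ h1 h2.le, sCount_transpose_transpose _ (by omega), sCount_cons, sCount_add,
      if_pos hkm]
    omega
  · refine lt_of_le_of_ne (hdom _) fun heq => ?_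
    have := ho.topSum_mod_two_of_mem_gap (by omega) hve h1.le h2.le
    have := topSum_transpose_cons_add_self_mod_two hq (by omega : 0 < 2 * m + 1) (k + 1)
    omega

lemma exists_even_part_of_odd_count_transpose {c : Multiset ℕ} (hpos : ∀ a ∈ c, 0 < a)
    (ho : IsOrthogonal c) (hcard : Multiset.card c % 2 = 1) {v : ℕ} (hve : v % 2 = 0)
    (hodd : ¬Even ((transpose c).count v)) :
    ∃ val, 2 ≤ val ∧ val % 2 = 0 ∧ 2 ≤ c.count val ∧ sCount c (val + 1) % 2 = 0 := by
  have hcount := count_add_sCount_succ (transpose c) v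
  set u := sCount (transpose c) v
  set w := sCount (transpose c) (v + 1)
  rw [Nat.even_iff] at hodd
  have hv : 1 ≤ v := by
    rcases Nat.eq_zero_or_pos v with rfl | hv
    · rw [Multiset.count_eq_zero.2 fun h0 => (transpose_pos c 0 h0).false] at hodd
      simp at hodd
    · exact hv
  have hcard1 : sCount c 1 = Multiset.card c := congrArg _ (Multiset.filter_eq_self.2 hpos)
  -- `v ≠ card c` because of the parities, so `c` has a `(v+1)`-st part
  have hw : 1 ≤ w := by
    by_contra! hw0
    have := (le_sCount_transpose_iff le_rfl hv).1 (by omega : 1 ≤ u)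
    have : ¬v + 1 ≤ sCount c 1 := fun h => by
      have := (le_sCount_transpose_iff le_rfl (by omega : 1 ≤ v + 1)).2 h
      omega
    omega
  have hpart : ∀ j, w < j → j ≤ u → sCount c j = v := fun j h1 h2 => by
    rw [← sCount_transpose_transpose c (by omega)]
    exact sCount_transpose_eq_of_mem_gap hv h1 h2
  have hcnt : ∀ x, x % 2 = 0 → c.count x % 2 = 0 := fun x hx => Nat.even_iff.1 (ho x hx)
  rcases Nat.mod_two_eq_zero_or_one u with hu | hu
  · have := hpart u (by omega) le_rfl
    have : sCount c (u + 1) < v := by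
      by_contra! h
      have := (le_sCount_transpose_iff (by omega) hv).2 h
      omega
    have := count_add_sCount_succ c u
    have := hcnt u hu
    exact ⟨u, by omega, hu, by omega, by omega⟩
  · have := hpart (w + 1) (by omega) (by omega)
    have : v + 1 ≤ sCount c w := (le_sCount_transpose_iff hw (by omega)).1 le_rfl
    have := count_add_sCount_succ c w
    have := hcnt w (by omega)
    exact ⟨w, by omega, by omega, by omega, by omega⟩

lemma exists_eq_cons_cons {c : Multiset ℕ} {v : ℕ} (h : 2 ≤ c.count v) :
    ∃ r, c = v ::ₘ v ::ₘ r := by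
  have hc : 0 < c.count v := by omega
  obtain ⟨t, rfl⟩ := Multiset.exists_cons_of_mem (Multiset.count_pos.1 hc)
  rw [Multiset.count_cons_self] at h
  have ht : 0 < t.count v := by omega
  obtain ⟨r, rfl⟩ := Multiset.exists_cons_of_mem (Multiset.count_pos.1 ht)
  exact ⟨r, rfl⟩

lemma IsPartitionOf.cons_succ_cons_pred {r : Multiset ℕ} {v N : ℕ}
    (h : IsPartitionOf (v ::ₘ v ::ₘ r) N) (hv : 2 ≤ v) :
    IsPartitionOf ((v + 1) ::ₘ (v - 1) ::ₘ r) N := by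
  obtain ⟨hpos, hsum⟩ := h
  refine ⟨fun a ha => ?_, ?_⟩
  · rcases Multiset.mem_cons.1 ha with rfl | ha
    · omega
    rcases Multiset.mem_cons.1 ha with rfl | ha
    · omega
    exact hpos a (Multiset.mem_cons_of_mem (Multiset.mem_cons_of_mem ha))
  · simp only [Multiset.sum_cons] at hsum ⊢
    omega

lemma IsOrthogonal.cons_succ_cons_pred {r : Multiset ℕ} {v : ℕ}
    (h : IsOrthogonal (v ::ₘ v ::ₘ r)) (hv : 1 ≤ v) (hve : v % 2 = 0) :
    IsOrthogonal ((v + 1) ::ₘ (v - 1) ::ₘ r) := fun a ha => by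
  have := h a ha
  simp only [Multiset.count_cons, Nat.even_iff] at this ⊢
  split_ifs at this ⊢ <;> omega

lemma topSum_cons_succ_cons_pred_add {r : Multiset ℕ} {v : ℕ} (hv : 1 ≤ v) (k : ℕ) :
    topSum ((v + 1) ::ₘ (v - 1) ::ₘ r) k +
        (if sCount (v ::ₘ v ::ₘ r) v ≤ k then 1 else 0) =
      topSum (v ::ₘ v ::ₘ r) k + (if sCount (v ::ₘ v ::ₘ r) (v + 1) < k then 1 else 0) := by
  set c := v ::ₘ v ::ₘ r
  have hsum : ((v + 1) ::ₘ (v - 1) ::ₘ r).sum = c.sum := by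
    simp only [c, Multiset.sum_cons]
    omega
  have hmem : ∀ x, 1 ≤ x → x ≤ v + 1 → x ∈ Finset.Icc 1 c.sum := fun x h1 h2 => by
    simp only [c, Multiset.sum_cons, Finset.mem_Icc]
    omega
  have key : ∀ i, min k (sCount ((v + 1) ::ₘ (v - 1) ::ₘ r) i) +
      (if i = v then if sCount c i ≤ k then 1 else 0 else 0) =
      min k (sCount c i) + (if i = v + 1 then if sCount c i < k then 1 else 0 else 0) := by
    intro i
    simp only [c, sCount_cons]
    split_ifs <;> omega
  have := Finset.sum_congr rfl fun i (_ : i ∈ Finset.Icc 1 c.sum) => key i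
  rw [Finset.sum_add_distrib, Finset.sum_add_distrib, Finset.sum_ite_eq', Finset.sum_ite_eq',
    if_pos (hmem v hv (by omega)), if_pos (hmem (v + 1) (by omega) le_rfl)] at this
  rwa [topSum, topSum, hsum]

lemma domLE.cons_succ_cons_pred {r Q : Multiset ℕ} {v : ℕ} (hv : 1 ≤ v)
    (h : domLE (v ::ₘ v ::ₘ r) Q)
    (hgap : ∀ k, sCount (v ::ₘ v ::ₘ r) (v + 1) < k → k < sCount (v ::ₘ v ::ₘ r) v →
      topSum (v ::ₘ v ::ₘ r) k < topSum Q k) :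
    domLE ((v + 1) ::ₘ (v - 1) ::ₘ r) Q := fun k => by
  have e := topSum_cons_succ_cons_pred_add (r := r) hv k
  have := h k
  by_cases hk : sCount (v ::ₘ v ::ₘ r) (v + 1) < k ∧ k < sCount (v ::ₘ v ::ₘ r) v
  · have := hgap k hk.1 hk.2
    split_ifs at e <;> omega
  · split_ifs at e <;> omega

lemma not_domLE_cons_succ_cons_pred (r : Multiset ℕ) {v : ℕ} (hv : 1 ≤ v) :
    ¬domLE ((v + 1) ::ₘ (v - 1) ::ₘ r) (v ::ₘ v ::ₘ r) := fun h => by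
  set k := sCount (v ::ₘ v ::ₘ r) (v + 1) + 1
  have e := topSum_cons_succ_cons_pred_add (r := r) hv k
  have := h k
  have : k < sCount (v ::ₘ v ::ₘ r) v := by
    have := sCount_antitone r (Nat.le_add_right v 1)
    simp only [k, sCount_cons]
    split_ifs <;> omega
  split_ifs at e <;> omega

theorem IsSOCollapse.isOrthogonal_transpose {q c : Multiset ℕ} (hq : ∀ a ∈ q, 0 < a) {m : ℕ}
    (hc : IsSOCollapse (transpose ((2 * m + 1) ::ₘ (q + q))) c) :
    IsOrthogonal (transpose c) := by
  obtain ⟨hpart, ho, hdom, hmax⟩ := hc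
  have hcard : Multiset.card c % 2 = 1 := by
    rw [← ho.sum_mod_two, hpart.2, sum_transpose, Multiset.sum_cons, Multiset.sum_add]
    omega
  intro v hve
  by_contra hodd
  obtain ⟨val, hval, hvale, hcount, hpar⟩ :=
    exists_even_part_of_odd_count_transpose hpart.1 ho hcard hve hodd
  obtain ⟨r, rfl⟩ := exists_eq_cons_cons hcount
  refine not_domLE_cons_succ_cons_pred r (by omega) (hmax _ (hpart.cons_succ_cons_pred hval)
    (ho.cons_succ_cons_pred (by omega) hvale) ?_)
  exact hdom.cons_succ_cons_pred (by omega) fun k h1 h2 =>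
    topSum_lt_of_mem_gap hq ho hdom hval hvale hpar h1 h2

theorem IsSOOddExpansion.eq_transpose {P e c : Multiset ℕ} (hP : ∀ a ∈ P, 0 < a)
    (he : IsSOOddExpansion P e) (hc : IsSOCollapse (transpose P) c)
    (hct : IsOrthogonal (transpose c)) : e = transpose c := by
  obtain ⟨⟨hepos, hesum⟩, -, heto, hPe, hemin⟩ := he
  obtain ⟨⟨hcpos, hcsum⟩, hco, hcP, hcmax⟩ := hc
  rw [sum_transpose] at hcsum
  have hPc : domLE P (transpose c) := by
    simpa only [transpose_transpose hP] using
      transpose_domLE_transpose hcpos (transpose_pos P) (by rw [hcsum, sum_transpose]) hcP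
  have hec : domLE e (transpose c) :=
    hemin _ ⟨transpose_pos c, by rw [sum_transpose, hcsum]⟩ hct
      (by rwa [transpose_transpose hcpos]) hPc
  have hetc : domLE (transpose e) c :=
    hcmax _ ⟨transpose_pos e, by rw [sum_transpose, sum_transpose, hesum]⟩ heto
      (transpose_domLE_transpose hP hepos hesum.symm hPe)
  have hce : domLE (transpose c) e := by
    simpa only [transpose_transpose hepos] using
      transpose_domLE_transpose (transpose_pos e) hcpos
        (by rw [sum_transpose, hesum, hcsum]) hetc
  exact hec.antisymm hepos (transpose_pos c) hce

lemma two_mul_sum_map_div_two_add_oddMult (p : Multiset ℕ) :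
    2 * (p.map (· / 2)).sum + oddMult p = p.sum := by
  induction p using Multiset.induction with
  | empty => rfl
  | cons a t ih =>
    simp only [oddMult, Multiset.map_cons, Multiset.sum_cons, Multiset.filter_cons] at ih ⊢
    split_ifs <;> simp only [Multiset.card_add, Multiset.card_singleton, Multiset.card_zero] <;>
      omega

lemma sum_pOne (p : Multiset ℕ) : (pOne p).sum = (p.map (· / 2)).sum := by
  have h0 : ((p.map (· / 2)).filter fun x => ¬0 < x).sum = 0 :=
    Multiset.sum_eq_zero fun x hx => by have := (Multiset.mem_filter.1 hx).2; omega
  rw [pOne, sum_transpose]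
  conv_rhs => rw [← Multiset.filter_add_not (fun x => 0 < x) (p.map (· / 2))]
  rw [Multiset.sum_add, h0, add_zero]

theorem expansion_iff_collapse_SO_odd_general (n : ℕ) (p : Multiset ℕ)
    (hp : IsPartitionOf p (2 * n)) :
    Even (oddMult p) ∧ 2 * nStar p = oddMult p ∧
      IsPartitionOf ((2 * nStar p + 1) ::ₘ (pOne p + pOne p)) (2 * n + 1) ∧
      IsOrthogonal ((2 * nStar p + 1) ::ₘ (pOne p + pOne p)) ∧
      ∀ e c₁ c₂ : Multiset ℕ,
        IsSOOddExpansion ((2 * nStar p + 1) ::ₘ (pOne p + pOne p)) e →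
        IsSOCollapse (pPlus p) c₁ →
        IsSOCollapse (transpose ((2 * nStar p + 1) ::ₘ (pOne p + pOne p))) c₂ →
        (e = transpose c₁ ↔ c₂ = c₁) := by
  have hhalf := two_mul_sum_map_div_two_add_oddMult p
  rw [hp.2] at hhalf
  have heven : Even (oddMult p) := Nat.even_iff.2 (by omega)
  have hnStar : 2 * nStar p = oddMult p := Nat.two_mul_div_two_of_even heven
  have hPpos := cons_add_self_pos (q := pOne p) (transpose_pos _) (Nat.succ_pos (2 * nStar p))
  refine ⟨heven, hnStar, ⟨hPpos, ?_⟩, isOrthogonal_cons_add_self (by omega) _,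
    fun e c₁ c₂ he hc₁ hc₂ => ?_⟩
  · rw [Multiset.sum_cons, Multiset.sum_add, sum_pOne]
    omega
  · rw [he.eq_transpose hPpos hc₂ (hc₂.isOrthogonal_transpose (transpose_pos _)),
      transpose_inj hc₂.1.1 hc₁.1.1]

/-- for a symplectic partition `p` of `2n`, the number of odd parts is even,
`2n* = Σ_{b_i odd} a_i`, `P = [p₁ p₁ (2n*+1)]` is an orthogonal partition of `2n+1`, and
`P^{SO_{2n+1}} = ((p^+)_{SO_{2n+1}})^t` iff `(P^t)_{SO_{2n+1}} = (p^+)_{SO_{2n+1}}`. -/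
theorem expansion_iff_collapse_SO_odd (n : ℕ) (p : Multiset ℕ)
    (hp : IsPartitionOf p (2 * n)) (hsymp : IsSymplectic p) :
    Even (oddMult p) ∧ 2 * nStar p = oddMult p ∧
      IsPartitionOf ((2 * nStar p + 1) ::ₘ (pOne p + pOne p)) (2 * n + 1) ∧
      IsOrthogonal ((2 * nStar p + 1) ::ₘ (pOne p + pOne p)) ∧
      ∀ e c₁ c₂ : Multiset ℕ,
        IsSOOddExpansion ((2 * nStar p + 1) ::ₘ (pOne p + pOne p)) e →
        IsSOCollapse (pPlus p) c₁ →
        IsSOCollapse (transpose ((2 * nStar p + 1) ::ₘ (pOne p + pOne p))) c₂ →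
        (e = transpose c₁ ↔ c₂ = c₁) :=
  expansion_iff_collapse_SO_odd_general n p hp

end JiangWF
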